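/- The map α_q defined on generators by α_q(E) = -(q/((1+q²)c)) v_2 v_0, α_q(F) = -(q²/((1+q²)c)) v_0 v_{-2}, α_q(K) = ((q³-q)/((1+q²)c)) v_2 v_{-2} + q^{-1}, α_q(K^{-1}) = -((q³-q)/((1+q²)c)) v_2 v_{-2} + q extends to a well-defined algebra homomorphism α_q : U_q(sl_2) → Cl_q(sl_2), i.e., the images satisfy the defining relations of U_q(sl_2). -/
import Mathlib


noncomputable section

open FreeAlgebra

/-- The defining relations of the quantised enveloping algebra U_q(sl_2):
generators E = ι 0, F = ι 1, K = ι 2, K⁻¹ = ι 3. -/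
inductive UqRel (q : ℂ) : FreeAlgebra ℂ (Fin 4) → FreeAlgebra ℂ (Fin 4) → Prop
  | rKE : UqRel q (ι ℂ 2 * ι ℂ 0) ((q ^ 2 : ℂ) • (ι ℂ 0 * ι ℂ 2))
  | rKF : UqRel q (ι ℂ 2 * ι ℂ 1) (((q ^ 2)⁻¹ : ℂ) • (ι ℂ 1 * ι ℂ 2))
  | rKK' : UqRel q (ι ℂ 2 * ι ℂ 3) 1
  | rK'K : UqRel q (ι ℂ 3 * ι ℂ 2) 1
  | rEF : UqRel q (ι ℂ 0 * ι ℂ 1 - ι ℂ 1 * ι ℂ 0)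
      (((q - q⁻¹)⁻¹ : ℂ) • (ι ℂ 2 - ι ℂ 3))

/-- The quantised enveloping algebra U_q(sl_2). -/
abbrev Uq (q : ℂ) := RingQuot (UqRel q)

def uE (q : ℂ) : Uq q := RingQuot.mkAlgHom ℂ (UqRel q) (ι ℂ 0)
def uF (q : ℂ) : Uq q := RingQuot.mkAlgHom ℂ (UqRel q) (ι ℂ 1)
def uK (q : ℂ) : Uq q := RingQuot.mkAlgHom ℂ (UqRel q) (ι ℂ 2)
def uKi (q : ℂ) : Uq q := RingQuot.mkAlgHom ℂ (UqRel q) (ι ℂ 3)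

/-- X = E. -/
def uX (q : ℂ) : Uq q := uE q
/-- Z = q⁻²EF - FE. -/
def uZ (q : ℂ) : Uq q := (q ^ 2)⁻¹ • (uE q * uF q) - uF q * uE q
/-- Y = KF. -/
def uY (q : ℂ) : Uq q := uK q * uF q

/-- The adjoint action of the generator E:
ad_E(y) = Σ E_{(1)} y S(E_{(2)}) = E y K⁻¹ - y E K⁻¹
(using ΔE = E⊗K + 1⊗E, S(K) = K⁻¹, S(E) = -EK⁻¹). -/
def adE (q : ℂ) (y : Uq q) : Uq q := uE q * y * uKi q - y * (uE q * uKi q)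

/-- The adjoint action of the generator F:
ad_F(y) = F y - K⁻¹ y K F (using ΔF = F⊗1 + K⁻¹⊗F, S(F) = -KF). -/
def adF (q : ℂ) (y : Uq q) : Uq q := uF q * y - uKi q * y * (uK q * uF q)

/-- The adjoint action of the generator K: ad_K(y) = K y K⁻¹. -/
def adK (q : ℂ) (y : Uq q) : Uq q := uK q * y * uKi q

/-- The adjoint action of the generator K⁻¹: ad_{K⁻¹}(y) = K⁻¹ y K. -/
def adKi (q : ℂ) (y : Uq q) : Uq q := uKi q * y * uK q

/-- The defining relations of the q-deformed Clifford algebra Cl_q(sl_2):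
generators v_2 = ι 0, v_0 = ι 1, v_{-2} = ι 2. -/
inductive ClRel (q c : ℂ) : FreeAlgebra ℂ (Fin 3) → FreeAlgebra ℂ (Fin 3) → Prop
  | r1 : ClRel q c (ι ℂ 0 * ι ℂ 0) 0
  | r2 : ClRel q c (ι ℂ 2 * ι ℂ 2) 0
  | r3 : ClRel q c (ι ℂ 1 * ι ℂ 0) (-((q ^ 2)⁻¹ • (ι ℂ 0 * ι ℂ 1)))
  | r4 : ClRel q c (ι ℂ 2 * ι ℂ 1) (-((q ^ 2)⁻¹ • (ι ℂ 1 * ι ℂ 2)))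
  | r5 : ClRel q c (ι ℂ 1 * ι ℂ 1)
      (((1 - q ^ 4) / q ^ 3) • (ι ℂ 0 * ι ℂ 2) + ((q ^ 2 + 1) / q * c) • 1)
  | r6 : ClRel q c (ι ℂ 2 * ι ℂ 0)
      (-(ι ℂ 0 * ι ℂ 2) + ((q ^ 2 + 1) / q ^ 2 * c) • 1)

/-- The q-deformed Clifford algebra Cl_q(sl_2). -/
abbrev Clq (q c : ℂ) := RingQuot (ClRel q c)

def cv2 (q c : ℂ) : Clq q c := RingQuot.mkAlgHom ℂ (ClRel q c) (ι ℂ 0)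
def cv0 (q c : ℂ) : Clq q c := RingQuot.mkAlgHom ℂ (ClRel q c) (ι ℂ 1)
def cvm2 (q c : ℂ) : Clq q c := RingQuot.mkAlgHom ℂ (ClRel q c) (ι ℂ 2)


section ClqAux

variable (q c : ℂ)

lemma rq_neg {q c : ℂ} (x : Clq q c) : -x = (-1 : ℂ) • x := (neg_one_smul ℂ x).symm

lemma cl_aa : cv2 q c * cv2 q c = 0 := by
  have h := RingQuot.mkAlgHom_rel ℂ (ClRel.r1 (q := q) (c := c))
  simpa [cv2, map_mul] using h

lemma cl_dd : cvm2 q c * cvm2 q c = 0 := by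
  have h := RingQuot.mkAlgHom_rel ℂ (ClRel.r2 (q := q) (c := c))
  simpa [cvm2, map_mul] using h

lemma cl_ba : cv0 q c * cv2 q c = (-(q ^ 2)⁻¹) • (cv2 q c * cv0 q c) := by
  have h := RingQuot.mkAlgHom_rel ℂ (ClRel.r3 (q := q) (c := c))
  simp only [cv0, cv2, map_mul, map_smul, map_neg] at h
  simp only [cv0, cv2]
  rw [h, rq_neg, smul_smul]
  match_scalars
  ring

lemma cl_db : cvm2 q c * cv0 q c = (-(q ^ 2)⁻¹) • (cv0 q c * cvm2 q c) := by
  have h := RingQuot.mkAlgHom_rel ℂ (ClRel.r4 (q := q) (c := c))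
  simp only [cv0, cvm2, map_mul, map_smul, map_neg] at h
  simp only [cv0, cvm2]
  rw [h, rq_neg, smul_smul]
  match_scalars
  ring

lemma cl_bb : cv0 q c * cv0 q c =
    ((1 - q ^ 4) / q ^ 3) • (cv2 q c * cvm2 q c) + ((q ^ 2 + 1) / q * c) • 1 := by
  have h := RingQuot.mkAlgHom_rel ℂ (ClRel.r5 (q := q) (c := c))
  simpa [cv0, cv2, cvm2, map_mul, map_smul, map_add, map_one] using h

lemma cl_da : cvm2 q c * cv2 q c =
    (-1 : ℂ) • (cv2 q c * cvm2 q c) + ((q ^ 2 + 1) / q ^ 2 * c) • 1 := by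
  have h := RingQuot.mkAlgHom_rel ℂ (ClRel.r6 (q := q) (c := c))
  simp only [cv2, cvm2, map_mul, map_smul, map_add, map_one, map_neg] at h
  simp only [cv2, cvm2]
  rw [h, rq_neg]

lemma cl_aa' (x : Clq q c) : cv2 q c * (cv2 q c * x) = 0 := by
  rw [← mul_assoc, cl_aa, zero_mul]

lemma cl_dd' (x : Clq q c) : cvm2 q c * (cvm2 q c * x) = 0 := by
  rw [← mul_assoc, cl_dd, zero_mul]

lemma cl_ba' (x : Clq q c) :
    cv0 q c * (cv2 q c * x) = (-(q ^ 2)⁻¹) • (cv2 q c * (cv0 q c * x)) := by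
  rw [← mul_assoc, cl_ba, smul_mul_assoc, mul_assoc]

lemma cl_db' (x : Clq q c) :
    cvm2 q c * (cv0 q c * x) = (-(q ^ 2)⁻¹) • (cv0 q c * (cvm2 q c * x)) := by
  rw [← mul_assoc, cl_db, smul_mul_assoc, mul_assoc]

lemma cl_bb' (x : Clq q c) : cv0 q c * (cv0 q c * x) =
    ((1 - q ^ 4) / q ^ 3) • (cv2 q c * (cvm2 q c * x)) + ((q ^ 2 + 1) / q * c) • x := by
  rw [← mul_assoc, cl_bb, add_mul, smul_mul_assoc, smul_mul_assoc, mul_assoc, one_mul]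

lemma cl_da' (x : Clq q c) : cvm2 q c * (cv2 q c * x) =
    (-1 : ℂ) • (cv2 q c * (cvm2 q c * x)) + ((q ^ 2 + 1) / q ^ 2 * c) • x := by
  rw [← mul_assoc, cl_da, add_mul, smul_mul_assoc, smul_mul_assoc, mul_assoc, one_mul]

end ClqAux

/-- The assignments α_q(E) = -(q/((1+q²)c)) v_2 v_0,
α_q(F) = -(q²/((1+q²)c)) v_0 v_{-2}, α_q(K) = ((q³-q)/((1+q²)c)) v_2 v_{-2} + q⁻¹,
α_q(K⁻¹) = -((q³-q)/((1+q²)c)) v_2 v_{-2} + q extend to a well-defined algebra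
homomorphism α_q : U_q(sl_2) → Cl_q(sl_2). -/
theorem alpha_is_algebra_hom
    (q c : ℂ) (hq : q ≠ 0) (hc : c ≠ 0) (hroot : ∀ n : ℕ, 0 < n → q ^ n ≠ 1) :
    ∃ α : Uq q →ₐ[ℂ] Clq q c,
      α (uE q) = -((q / ((1 + q ^ 2) * c)) • (cv2 q c * cv0 q c)) ∧
      α (uF q) = -((q ^ 2 / ((1 + q ^ 2) * c)) • (cv0 q c * cvm2 q c)) ∧
      α (uK q) = ((q ^ 3 - q) / ((1 + q ^ 2) * c)) • (cv2 q c * cvm2 q c) +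
        (q⁻¹ : ℂ) • (1 : Clq q c) ∧
      α (uKi q) = -(((q ^ 3 - q) / ((1 + q ^ 2) * c)) • (cv2 q c * cvm2 q c)) +
        q • (1 : Clq q c) := by
  have h2 : (1 : ℂ) + q ^ 2 ≠ 0 := by
    intro h
    exact hroot 4 (by norm_num) (by linear_combination (q ^ 2 - 1) * h)
  have hq2 : q ^ 2 ≠ 1 := hroot 2 (by norm_num)
  have hqi : q - q⁻¹ ≠ 0 := by
    intro h
    apply hq2
    field_simp at h
    linear_combination h
  have hd : c + q ^ 2 * c ≠ 0 := by
    rw [show c + q ^ 2 * c = (1 + q ^ 2) * c by ring]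
    exact mul_ne_zero h2 hc
  have e1 : q * q⁻¹ = 1 := mul_inv_cancel₀ hq
  have e2 : q ^ 2 * (q ^ 2)⁻¹ = 1 := mul_inv_cancel₀ (pow_ne_zero 2 hq)
  have e3 : (c + q ^ 2 * c) * (c + q ^ 2 * c)⁻¹ = 1 := mul_inv_cancel₀ hd
  have e4 : (q + -q⁻¹) * (q + -q⁻¹)⁻¹ = 1 := mul_inv_cancel₀ (by rw [← sub_eq_add_neg]; exact hqi)
  set g : Fin 4 → Clq q c :=
    ![-((q / ((1 + q ^ 2) * c)) • (cv2 q c * cv0 q c)),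
      -((q ^ 2 / ((1 + q ^ 2) * c)) • (cv0 q c * cvm2 q c)),
      ((q ^ 3 - q) / ((1 + q ^ 2) * c)) • (cv2 q c * cvm2 q c) + (q⁻¹ : ℂ) • 1,
      -(((q ^ 3 - q) / ((1 + q ^ 2) * c)) • (cv2 q c * cvm2 q c)) + q • 1] with hg
  have hrel : ∀ ⦃x y : FreeAlgebra ℂ (Fin 4)⦄, UqRel q x y →
      (FreeAlgebra.lift ℂ g) x = (FreeAlgebra.lift ℂ g) y := by
    intro x y h
    induction h with
    | rKE =>
        simp only [map_mul, map_smul, FreeAlgebra.lift_ι_apply, hg,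
          Matrix.cons_val_zero, Matrix.cons_val_one, Matrix.head_cons,
          Matrix.cons_val_two, Matrix.tail_cons, Matrix.cons_val_three]
        simp only [rq_neg, smul_smul]
        simp only [mul_add, add_mul, mul_smul_comm, smul_mul_assoc,
          smul_add, smul_smul, one_mul, mul_one, mul_assoc,
          cl_aa', cl_dd', cl_ba', cl_db', cl_bb', cl_da', cl_aa, cl_dd,
          cl_ba, cl_db, cl_bb, cl_da, smul_zero, mul_zero, zero_mul, add_zero, zero_add]
        match_scalars
        · linear_combination ((c + q ^ 2 * c)⁻¹ * q ^ 2 + -1 * (c + q ^ 2 * c)⁻¹) * e1 + (-1 * (c + q ^ 2 * c)⁻¹ ^ 2 * q ^ 4 * c + (c + q ^ 2 * c)⁻¹ ^ 2 * c) * e2 + (-1 * (c + q ^ 2 * c)⁻¹ * q ^ 2 + (c + q ^ 2 * c)⁻¹) * e3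
    | rKF =>
        simp only [map_mul, map_smul, FreeAlgebra.lift_ι_apply, hg,
          Matrix.cons_val_zero, Matrix.cons_val_one, Matrix.head_cons,
          Matrix.cons_val_two, Matrix.tail_cons, Matrix.cons_val_three]
        simp only [rq_neg, smul_smul]
        simp only [mul_add, add_mul, mul_smul_comm, smul_mul_assoc,
          smul_add, smul_smul, one_mul, mul_one, mul_assoc,
          cl_aa', cl_dd', cl_ba', cl_db', cl_bb', cl_da', cl_aa, cl_dd,
          cl_ba, cl_db, cl_bb, cl_da, smul_zero, mul_zero, zero_mul, add_zero, zero_add]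
        match_scalars
        · linear_combination ((q + -q⁻¹)⁻¹ * (c + q ^ 2 * c)⁻¹ ^ 2 * (q ^ 2)⁻¹ * c + (q + -q⁻¹)⁻¹ * (c + q ^ 2 * c)⁻¹ ^ 2 * c + -1 * (q + -q⁻¹)⁻¹ * (c + q ^ 2 * c)⁻¹ * (q ^ 2)⁻¹ + (c + q ^ 2 * c)⁻¹ * (q ^ 2)⁻¹ * q + -1 * (c + q ^ 2 * c)⁻¹ * q) * e1 + (-2 * (q + -q⁻¹)⁻¹ * (c + q ^ 2 * c)⁻¹ ^ 2 * c + (q + -q⁻¹)⁻¹ * (c + q ^ 2 * c)⁻¹ + (c + q ^ 2 * c)⁻¹ ^ 2 * (q ^ 2)⁻¹ * q ^ 5 * c + -1 * (c + q ^ 2 * c)⁻¹ ^ 2 * (q ^ 2)⁻¹ * q * c + (c + q ^ 2 * c)⁻¹ ^ 2 * q ^ 3 * c) * e2 + ((q + -q⁻¹)⁻¹ * (c + q ^ 2 * c)⁻¹ * (q ^ 2)⁻¹ + -1 * (q + -q⁻¹)⁻¹ * (c + q ^ 2 * c)⁻¹ + (c + q ^ 2 * c)⁻¹ * q) * e3 +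 ((c + q ^ 2 * c)⁻¹ ^ 2 * (q ^ 2)⁻¹ * q * c + (c + q ^ 2 * c)⁻¹ ^ 2 * q * c + -1 * (c + q ^ 2 * c)⁻¹ * (q ^ 2)⁻¹ * q) * e4
    | rKK' =>
        simp only [map_mul, map_one, FreeAlgebra.lift_ι_apply, hg,
          Matrix.cons_val_zero, Matrix.cons_val_one, Matrix.head_cons,
          Matrix.cons_val_two, Matrix.tail_cons, Matrix.cons_val_three]
        simp only [rq_neg, smul_smul]
        simp only [mul_add, add_mul, mul_smul_comm, smul_mul_assoc,
          smul_add, smul_smul, one_mul, mul_one, mul_assoc,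
          cl_aa', cl_dd', cl_ba', cl_db', cl_bb', cl_da', cl_aa, cl_dd,
          cl_ba, cl_db, cl_bb, cl_da, smul_zero, mul_zero, zero_mul, add_zero, zero_add]
        match_scalars
        · linear_combination (-1 * (c + q ^ 2 * c)⁻¹ * q ^ 2 + (c + q ^ 2 * c)⁻¹) * e1 + (-1 * (c + q ^ 2 * c)⁻¹ ^ 2 * q ^ 6 * c + (c + q ^ 2 * c)⁻¹ ^ 2 * q ^ 4 * c + (c + q ^ 2 * c)⁻¹ ^ 2 * q ^ 2 * c + -1 * (c + q ^ 2 * c)⁻¹ ^ 2 * c) * e2 + (-1 * (c + q ^ 2 * c)⁻¹ * q ^ 4 + 2 * (c + q ^ 2 * c)⁻¹ * q ^ 2 + -1 * (c + q ^ 2 * c)⁻¹) * e3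
        · linear_combination (1) * e1
    | rK'K =>
        simp only [map_mul, map_one, FreeAlgebra.lift_ι_apply, hg,
          Matrix.cons_val_zero, Matrix.cons_val_one, Matrix.head_cons,
          Matrix.cons_val_two, Matrix.tail_cons, Matrix.cons_val_three]
        simp only [rq_neg, smul_smul]
        simp only [mul_add, add_mul, mul_smul_comm, smul_mul_assoc,
          smul_add, smul_smul, one_mul, mul_one, mul_assoc,
          cl_aa', cl_dd', cl_ba', cl_db', cl_bb', cl_da', cl_aa, cl_dd,
          cl_ba, cl_db, cl_bb, cl_da, smul_zero, mul_zero, zero_mul, add_zero, zero_add]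
        match_scalars
        · linear_combination (-1 * (c + q ^ 2 * c)⁻¹ * q ^ 2 + (c + q ^ 2 * c)⁻¹) * e1 + (-1 * (c + q ^ 2 * c)⁻¹ ^ 2 * q ^ 6 * c + (c + q ^ 2 * c)⁻¹ ^ 2 * q ^ 4 * c + (c + q ^ 2 * c)⁻¹ ^ 2 * q ^ 2 * c + -1 * (c + q ^ 2 * c)⁻¹ ^ 2 * c) * e2 + (-1 * (c + q ^ 2 * c)⁻¹ * q ^ 4 + 2 * (c + q ^ 2 * c)⁻¹ * q ^ 2 + -1 * (c + q ^ 2 * c)⁻¹) * e3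
        · linear_combination (1) * e1
    | rEF =>
        simp only [map_mul, map_sub, map_smul, FreeAlgebra.lift_ι_apply, hg,
          Matrix.cons_val_zero, Matrix.cons_val_one, Matrix.head_cons,
          Matrix.cons_val_two, Matrix.tail_cons, Matrix.cons_val_three]
        rw [sub_eq_add_neg, sub_eq_add_neg]
        simp only [rq_neg, smul_smul, smul_add]
        simp only [mul_add, add_mul, mul_smul_comm, smul_mul_assoc,
          smul_add, smul_smul, one_mul, mul_one, mul_assoc,
          cl_aa', cl_dd', cl_ba', cl_db', cl_bb', cl_da', cl_aa, cl_dd,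
          cl_ba, cl_db, cl_bb, cl_da, smul_zero, mul_zero, zero_mul, add_zero, zero_add]
        match_scalars
        · linear_combination (-2 * (q + -q⁻¹)⁻¹ * (c + q ^ 2 * c)⁻¹ * q + (c + q ^ 2 * c)⁻¹ ^ 2 * (q ^ 2)⁻¹ ^ 2 * q ^ 4 * c + (c + q ^ 2 * c)⁻¹ ^ 2 * (q ^ 2)⁻¹ ^ 2 * q ^ 2 * c + (c + q ^ 2 * c)⁻¹ ^ 2 * (q ^ 2)⁻¹ * q⁻¹ ^ 2 * q ^ 8 * c + (c + q ^ 2 * c)⁻¹ ^ 2 * (q ^ 2)⁻¹ * q⁻¹ ^ 2 * q ^ 6 * c + -1 * (c + q ^ 2 * c)⁻¹ ^ 2 * (q ^ 2)⁻¹ * q⁻¹ ^ 2 * q ^ 4 * c + -1 * (c + q ^ 2 * c)⁻¹ ^ 2 * (q ^ 2)⁻¹ * q⁻¹ ^ 2 * q ^ 2 * c + (c + q ^ 2 * c)⁻¹ ^ 2 * (q ^ 2)⁻¹ * q⁻¹ * q ^ 7 * c + (c + q ^ 2 * c)⁻¹ ^ 2 * (q ^ 2)⁻¹ * q⁻¹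 * q ^ 5 * c + -1 * (c + q ^ 2 * c)⁻¹ ^ 2 * (q ^ 2)⁻¹ * q⁻¹ * q ^ 3 * c + -1 * (c + q ^ 2 * c)⁻¹ ^ 2 * (q ^ 2)⁻¹ * q⁻¹ * q * c + (c + q ^ 2 * c)⁻¹ ^ 2 * (q ^ 2)⁻¹ * q ^ 6 * c + (c + q ^ 2 * c)⁻¹ ^ 2 * (q ^ 2)⁻¹ * q ^ 4 * c + -1 * (c + q ^ 2 * c)⁻¹ ^ 2 * (q ^ 2)⁻¹ * q ^ 2 * c + -1 * (c + q ^ 2 * c)⁻¹ ^ 2 * (q ^ 2)⁻¹ * c + (c + q ^ 2 * c)⁻¹ ^ 2 * q ^ 4 * c + (c + q ^ 2 * c)⁻¹ ^ 2 * q ^ 2 * c) * e1 + ((c + q ^ 2 * c)⁻¹ ^ 2 * (q ^ 2)⁻¹ * q ^ 2 * c + (c + q ^ 2 * c)⁻¹ ^ 2 * (q ^ 2)⁻¹ * c + (c + q ^ 2 * c)⁻¹ ^ 2 * q ^ 4 * c + (c + q ^ 2 * c)⁻¹ ^ 2 * q ^ 2 * c) * e2 + (2 * (c + q ^ 2 *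 c)⁻¹ * q ^ 2) * e3 + (-2 * (c + q ^ 2 * c)⁻¹ * q ^ 2) * e4
        · linear_combination (-1 * (c + q ^ 2 * c)⁻¹ ^ 2 * (q ^ 2)⁻¹ * q ^ 6 * c ^ 2 + -2 * (c + q ^ 2 * c)⁻¹ ^ 2 * (q ^ 2)⁻¹ * q ^ 4 * c ^ 2 + -1 * (c + q ^ 2 * c)⁻¹ ^ 2 * (q ^ 2)⁻¹ * q ^ 2 * c ^ 2) * e1 + (-1 * (c + q ^ 2 * c)⁻¹ ^ 2 * q ^ 4 * c ^ 2 + -2 * (c + q ^ 2 * c)⁻¹ ^ 2 * q ^ 2 * c ^ 2 + -1 * (c + q ^ 2 * c)⁻¹ ^ 2 * c ^ 2) * e2 + (-1 * (c + q ^ 2 * c)⁻¹ * q ^ 2 * c + -1 * (c + q ^ 2 * c)⁻¹ * c + -1) * e3 + (1) * e4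
  refine ⟨RingQuot.liftAlgHom ℂ ⟨FreeAlgebra.lift ℂ g, hrel⟩, ?_, ?_, ?_, ?_⟩ <;>
    simp [uE, uF, uK, uKi, RingQuot.liftAlgHom_mkAlgHom_apply, hg,
      FreeAlgebra.lift_ι_apply]


end
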